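/- arXiv:2206.06722 — 3 statements merged into one kernel-verified Lean document; each statement's English description precedes it below -/
import Mathlib

section
/- Let u₁·v₁^ω and u₂·v₂^ω be ultimately periodic words with v₁, v₂ nonempty, and let t, t' be positions. Let b = max(|u₁| - t, |u₂| - t') + lcm(|v₁|, |v₂|) (where subtraction is truncated at 0). Then the suffixes u₁v₁^ω[t,∞) and u₂v₂^ω[t',∞) are equal (as infinite words) if and only if they agree on their first b symbols, i.e., u₁v₁^ω[t+k] = u₂v₂^ω[t'+k] for all k < b. -/
/-!
Past position `max (|u₁| - t) (|u₂| - t')` both suffixes are periodic with period `|v₁|`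
resp. `|v₂|`, hence both with period `lcm |v₁| |v₂|`; by strong induction, agreement on the
preperiod and one common period then propagates to every position.
-/

def suffixW {A : Type*} (w : ℕ → A) (k : ℕ) : ℕ → A := fun n => w (n + k)

def upWord {A : Type*} (u v : List A) (hv : v ≠ []) : ℕ → A := fun n =>
  if h : n < u.length then u.get ⟨n, h⟩
  else v.get ⟨(n - u.length) % v.length, Nat.mod_lt _ (List.length_pos_iff.mpr hv)⟩

theorem eq_of_forall_lt_add_of_periodic_from {A : Type*} {f g : ℕ → A} {m p : ℕ} (hp : 0 < p)
    (hf : ∀ n, m ≤ n → f (n + p) = f n) (hg : ∀ n, m ≤ n → g (n + p) = g n)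
    (hfg : ∀ k < m + p, f k = g k) : f = g := by
  funext n
  induction n using Nat.strong_induction_on with
  | _ n ih =>
    by_cases hn : n < m + p
    · exact hfg n hn
    · obtain ⟨k, rfl⟩ : ∃ k, n = k + p := ⟨n - p, by omega⟩
      rw [hf k (by omega), hg k (by omega), ih k (by omega)]

theorem upWord_add_mul_length {A : Type*} (u v : List A) (hv : v ≠ []) {n : ℕ}
    (hn : u.length ≤ n) (j : ℕ) :
    upWord u v hv (n + j * v.length) = upWord u v hv n := by
  have hshift : n + j * v.length - u.length = n - u.length + j * v.length := by omega
  simp only [upWord, dif_neg (show ¬n + j * v.length < u.length by omega),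
    dif_neg (show ¬n < u.length by omega), hshift, Nat.add_mul_mod_self_right]

theorem suffixW_upWord_add_of_dvd {A : Type*} (u v : List A) (hv : v ≠ []) (t : ℕ) {p n : ℕ}
    (hp : v.length ∣ p) (hn : u.length - t ≤ n) :
    suffixW (upWord u v hv) t (n + p) = suffixW (upWord u v hv) t n := by
  obtain ⟨j, rfl⟩ := hp
  simp only [suffixW]
  rw [← upWord_add_mul_length u v hv (show u.length ≤ n + t by omega) j]
  ring_nf

theorem suffix_eq_iff_agree_on_prefix {A : Type*} (u₁ v₁ u₂ v₂ : List A)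
    (h₁ : v₁ ≠ []) (h₂ : v₂ ≠ []) (t t' : ℕ) :
    suffixW (upWord u₁ v₁ h₁) t = suffixW (upWord u₂ v₂ h₂) t' ↔
      ∀ k < max (u₁.length - t) (u₂.length - t') + Nat.lcm v₁.length v₂.length,
        upWord u₁ v₁ h₁ (t + k) = upWord u₂ v₂ h₂ (t' + k) := by
  simp only [add_comm t, add_comm t']
  constructor
  · intro h k _
    exact congrFun h k
  · intro h
    have hL : 0 < Nat.lcm v₁.length v₂.length :=
      Nat.lcm_pos (List.length_pos_iff.mpr h₁) (List.length_pos_iff.mpr h₂)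
    exact eq_of_forall_lt_add_of_periodic_from hL
      (fun n hn => suffixW_upWord_add_of_dvd u₁ v₁ h₁ t (Nat.dvd_lcm_left _ _)
        (le_of_max_le_left hn))
      (fun n hn => suffixW_upWord_add_of_dvd u₂ v₂ h₂ t' (Nat.dvd_lcm_right _ _)
        (le_of_max_le_right hn))
      h
end

section
/- On an ultimately periodic word u·v^ω with v nonempty, the valuation of any LTL formula φ on any suffix is determined by its values on the first |u|+|v| suffixes: for all i, V(φ, (uv^ω)[|u|+i, ∞)) = V(φ, (uv^ω)[|u| + (i mod |v|), ∞)). -/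
inductive LTL (P : Type*) where
  | atom : P → LTL P
  | neg : LTL P → LTL P
  | disj : LTL P → LTL P → LTL P
  | next : LTL P → LTL P
  | untl : LTL P → LTL P → LTL P

def sat {P : Type*} : LTL P → (ℕ → Set P) → Prop
  | .atom p, w => p ∈ w 0
  | .neg φ, w => ¬ sat φ w
  | .disj φ ψ, w => sat φ w ∨ sat ψ w
  | .next φ, w => sat φ (suffixW w 1)
  | .untl φ ψ, w => ∃ i, sat ψ (suffixW w i) ∧ ∀ j < i, sat φ (suffixW w j)

theorem upWord_length_add {A : Type*} (u v : List A) (hv : v ≠ []) (n : ℕ) :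
    upWord u v hv (u.length + n) =
      v.get ⟨n % v.length, Nat.mod_lt _ (List.length_pos_iff.mpr hv)⟩ := by
  simp only [upWord, dif_neg (Nat.not_lt.mpr (Nat.le_add_right _ _)), Nat.add_sub_cancel_left]

theorem suffixW_upWord_length_add_mod {A : Type*} (u v : List A) (hv : v ≠ []) (i : ℕ) :
    suffixW (upWord u v hv) (u.length + i) =
      suffixW (upWord u v hv) (u.length + i % v.length) := by
  funext n
  simp only [suffixW, Nat.add_left_comm n u.length, upWord_length_add, Nat.add_mod_mod]

theorem sat_suffix_mod {P : Type*} (u v : List (Set P)) (hv : v ≠ []) (φ : LTL P) (i : ℕ) :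
    sat φ (suffixW (upWord u v hv) (u.length + i)) ↔
      sat φ (suffixW (upWord u v hv) (u.length + i % v.length)) := by
  rw [suffixW_upWord_length_add_mod]
end

section
/- Existence of a consistent formula for any sample: given finite disjoint sets P and N of ultimately periodic words over 2^AP (AP finite and nonempty), with every word in P distinct from every word in N, there exists an LTL formula φ such that V(φ, α) = 1 for all α ∈ P and V(φ, β) = 0 for all β ∈ N. -/
/-!
Two distinct words differ at some position `n` in some proposition `p`, so `Xⁿ p` or its negation
separates them. For `α ∈ Pos` the conjunction over `β ∈ Neg` of these separators holds on `α` and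
on no word of `Neg`; the disjunction of these conjunctions over `α ∈ Pos` is consistent with the
sample.
-/

namespace LTL

variable {P : Type*}

def top (p : P) : LTL P := .disj (.atom p) (.neg (.atom p))

def bot (p : P) : LTL P := .neg (top p)

def conj (φ ψ : LTL P) : LTL P := .neg (.disj (.neg φ) (.neg ψ))

def nextIter : ℕ → LTL P → LTL P
  | 0, φ => φ
  | n + 1, φ => .next (nextIter n φ)

@[simp]
theorem sat_top (p : P) (w : ℕ → Set P) : sat (top p) w := by
  simp only [top, sat]
  exact em _

@[simp]
theorem not_sat_bot (p : P) (w : ℕ → Set P) : ¬ sat (bot p) w := by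
  simp only [bot, sat, sat_top, not_true_eq_false, not_false_eq_true]

@[simp]
theorem sat_conj (φ ψ : LTL P) (w : ℕ → Set P) : sat (conj φ ψ) w ↔ sat φ w ∧ sat ψ w := by
  simp only [conj, sat]
  tauto

theorem sat_nextIter (n : ℕ) (φ : LTL P) (w : ℕ → Set P) :
    sat (nextIter n φ) w ↔ sat φ (suffixW w n) := by
  induction n generalizing w with
  | zero => rfl
  | succ n ih =>
    simp only [nextIter, sat, ih]
    rfl

theorem sat_nextIter_atom (n : ℕ) (p : P) (w : ℕ → Set P) :
    sat (nextIter n (.atom p)) w ↔ p ∈ w n := by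
  simp only [sat_nextIter, sat, suffixW, zero_add]

theorem exists_sat_not_sat_of_ne {α β : ℕ → Set P} (h : α ≠ β) :
    ∃ φ : LTL P, sat φ α ∧ ¬ sat φ β := by
  obtain ⟨n, hn⟩ := Function.ne_iff.mp h
  obtain ⟨p, hp⟩ := not_forall.mp (mt Set.ext hn)
  have hsep : ¬ (sat (nextIter n (.atom p)) α ↔ sat (nextIter n (.atom p)) β) := by
    simpa only [sat_nextIter_atom] using hp
  by_cases hα : sat (nextIter n (.atom p)) α
  · exact ⟨_, hα, fun hβ => hsep (iff_of_true hα hβ)⟩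
  · exact ⟨.neg _, hα, fun hβ => hsep (iff_of_false hα hβ)⟩

theorem exists_sat_forall_not_sat (p : P) {α : ℕ → Set P} {Neg : Set (ℕ → Set P)}
    (hN : Neg.Finite) (h : ∀ β ∈ Neg, ∃ φ : LTL P, sat φ α ∧ ¬ sat φ β) :
    ∃ φ : LTL P, sat φ α ∧ ∀ β ∈ Neg, ¬ sat φ β := by
  induction Neg, hN using Set.Finite.induction_on with
  | empty => exact ⟨top p, sat_top p α, by simp⟩
  | @insert β Neg _ _ ih =>
    obtain ⟨φ, hφα, hφN⟩ := ih fun γ hγ => h γ (Set.mem_insert_of_mem β hγ)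
    obtain ⟨ψ, hψα, hψβ⟩ := h β (Set.mem_insert β Neg)
    refine ⟨conj φ ψ, (sat_conj φ ψ α).mpr ⟨hφα, hψα⟩, ?_⟩
    rintro γ (rfl | hγ) hsat
    · exact hψβ ((sat_conj φ ψ γ).mp hsat).2
    · exact hφN γ hγ ((sat_conj φ ψ γ).mp hsat).1

theorem exists_forall_sat_forall_not_sat (p : P) {Pos Neg : Set (ℕ → Set P)} (hP : Pos.Finite)
    (h : ∀ α ∈ Pos, ∃ φ : LTL P, sat φ α ∧ ∀ β ∈ Neg, ¬ sat φ β) :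
    ∃ φ : LTL P, (∀ α ∈ Pos, sat φ α) ∧ ∀ β ∈ Neg, ¬ sat φ β := by
  induction Pos, hP using Set.Finite.induction_on with
  | empty => exact ⟨bot p, by simp, fun β _ => not_sat_bot p β⟩
  | @insert α Pos _ _ ih =>
    obtain ⟨φ, hφP, hφN⟩ := ih fun γ hγ => h γ (Set.mem_insert_of_mem α hγ)
    obtain ⟨ψ, hψα, hψN⟩ := h α (Set.mem_insert α Pos)
    refine ⟨.disj ψ φ, ?_, fun β hβ hsat => hsat.elim (hψN β hβ) (hφN β hβ)⟩
    rintro γ (rfl | hγ)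
    exacts [Or.inl hψα, Or.inr (hφP γ hγ)]

end LTL

theorem consistent_formula_exists_general {AP : Type*} [Nonempty AP]
    (Pos Neg : Set (ℕ → Set AP)) (hPfin : Pos.Finite) (hNfin : Neg.Finite)
    (hdisj : ∀ w ∈ Pos, w ∉ Neg) :
    ∃ φ : LTL AP, (∀ w ∈ Pos, sat φ w) ∧ (∀ w ∈ Neg, ¬ sat φ w) := by
  obtain ⟨p⟩ := ‹Nonempty AP›
  refine LTL.exists_forall_sat_forall_not_sat p hPfin fun α hα => ?_
  refine LTL.exists_sat_forall_not_sat p hNfin fun β hβ => ?_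
  exact LTL.exists_sat_not_sat_of_ne fun hαβ => hdisj α hα (hαβ ▸ hβ)

theorem consistent_formula_exists {AP : Type*} [Fintype AP] [Nonempty AP]
    (Pos Neg : Set (ℕ → Set AP)) (hPfin : Pos.Finite) (hNfin : Neg.Finite)
    (hup : ∀ w ∈ Pos ∪ Neg, ∃ (u v : List (Set AP)) (hv : v ≠ []), w = upWord u v hv)
    (hdisj : ∀ w ∈ Pos, w ∉ Neg) :
    ∃ φ : LTL AP, (∀ w ∈ Pos, sat φ w) ∧ (∀ w ∈ Neg, ¬ sat φ w) :=
  consistent_formula_exists_general Pos Neg hPfin hNfin hdisj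
end
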